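/- Let (λ̊, λ) ∈ ℝ × ℝ³ with λ̊² + ‖λ‖² = 1, and let R(λ̊, λ) := 1 + 2 • (S(λ) * (λ̊ • 1 + S(λ))) be the Rodrigues rotation matrix. Then R(λ̊, λ) is a special orthogonal matrix: R(λ̊, λ)ᵀ * R(λ̊, λ) = 1 and det (R(λ̊, λ)) = 1. -/

import Mathlib

/-! With `s = S(λ)` we have `R = 1 + 2 s (λ̊ + s)`, a polynomial in `s`, and `sᵀ = -s`, so `Rᵀ` is
the same expression in `-s`. The triple cross product gives `s³ = -‖λ‖² s`, which collapses
`Rᵀ R` to `1 + 4 (1 - λ̊² - ‖λ‖²) s² = 1`. The determinant is a direct expansion. -/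

open Matrix
noncomputable section

/-- `ℝ³` as Euclidean space (vectors `Fin 3 → ℝ` with the Euclidean norm). -/
abbrev R3 : Type := EuclideanSpace ℝ (Fin 3)

/-- Skew-symmetric cross-product matrix `S(x)` of a vector `x ∈ ℝ³`. -/
def S (x : R3) : Matrix (Fin 3) (Fin 3) ℝ :=
  !![0, -x 2, x 1; x 2, 0, -x 0; -x 1, x 0, 0]

/-- Projection matrix `Π_y := I - y yᵀ` onto the plane orthogonal to `y`. -/
def proj (y : R3) : Matrix (Fin 3) (Fin 3) ℝ := 1 - Matrix.vecMulVec y y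

/-- Matrix–vector product, with the result regarded as an element of `ℝ³`
(so that `‖·‖` is the Euclidean norm). -/
def mulv (M : Matrix (Fin 3) (Fin 3) ℝ) (v : R3) : R3 := WithLp.toLp 2 (M.mulVec v)

/-- Cross product `×₃` regarded as an operation on `ℝ³`. -/
def cross (a b : R3) : R3 := WithLp.toLp 2 (a.ofLp ⨯₃ b.ofLp)

/-- Rodrigues rotation matrix `R(λ̊, λ) := I + 2 S(λ)(λ̊ I + S(λ))` of a
quaternion pair `(λ̊, λ)`. -/
def rod (q0 : ℝ) (qv : R3) : Matrix (Fin 3) (Fin 3) ℝ :=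
  1 + 2 • (S qv * (q0 • 1 + S qv))

section Rodrigues

variable {R A : Type*} [CommRing R] [Ring A] [Algebra R A]

def rodrigues (t : R) (a : A) : A := 1 + 2 • (a * (t • 1 + a))

theorem rodrigues_neg_mul_rodrigues {a : A} {t c : R} (ha : a ^ 3 = -c • a) (h : t ^ 2 + c = 1) :
    rodrigues t (-a) * rodrigues t a = 1 := by
  have ha4 : a * a * a * a = -c • (a * a) := by
    rw [pow_three, ← mul_assoc] at ha
    rw [ha, smul_mul_assoc]
  simp only [rodrigues, mul_add, add_mul, smul_mul_assoc, mul_smul_comm, mul_one, one_mul, smul_add,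
    neg_mul, mul_neg, neg_neg, smul_neg, ← mul_assoc, ha4]
  linear_combination (norm := module) (-4 : R) • h • (a * a)

theorem transpose_rodrigues {n : Type*} [Fintype n] [DecidableEq n] (t : R) (M : Matrix n n R) :
    (rodrigues t M)ᵀ = rodrigues t Mᵀ := by
  simp only [rodrigues, transpose_add, transpose_one, transpose_smul, transpose_mul, mul_add,
    mul_smul_comm, mul_one]

end Rodrigues

theorem S_mulVec (x : R3) (v : Fin 3 → ℝ) : S x *ᵥ v = x.ofLp ⨯₃ v := by
  ext i
  fin_cases i <;> simp [S, cross_apply, mulVec, dotProduct, Fin.sum_univ_three] <;> ring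

theorem transpose_S (x : R3) : (S x)ᵀ = -S x := by
  ext i j
  fin_cases i <;> fin_cases j <;> simp [S]

theorem S_pow_three (x : R3) : S x ^ 3 = -(‖x‖ ^ 2) • S x := by
  have hx : ‖x‖ ^ 2 = x.ofLp ⬝ᵥ x.ofLp := by
    rw [EuclideanSpace.real_norm_sq_eq]
    simp [dotProduct, sq]
  refine ext_iff_mulVec.mpr fun v => ?_
  rw [pow_three, ← mulVec_mulVec, ← mulVec_mulVec, neg_smul, neg_mulVec, smul_mulVec, S_mulVec,
    S_mulVec, S_mulVec, cross_cross_eq_smul_sub_smul', dot_self_cross, zero_smul, zero_sub, hx]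

theorem rod_eq_rodrigues (q0 : ℝ) (qv : R3) : rod q0 qv = rodrigues q0 (S qv) := rfl

theorem transpose_rod_mul_rod (q0 : ℝ) (qv : R3) (h : q0 ^ 2 + ‖qv‖ ^ 2 = 1) :
    (rod q0 qv)ᵀ * rod q0 qv = 1 := by
  rw [rod_eq_rodrigues, transpose_rodrigues, transpose_S]
  exact rodrigues_neg_mul_rodrigues (S_pow_three qv) h

theorem det_rod (q0 : ℝ) (qv : R3) :
    (rod q0 qv).det = 1 - 4 * ‖qv‖ ^ 2 * (1 - q0 ^ 2 - ‖qv‖ ^ 2) := by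
  rw [EuclideanSpace.real_norm_sq_eq, det_fin_three]
  simp [rod, S, vecMul, dotProduct, Fin.sum_univ_three, one_apply]
  ring

/-- the Rodrigues matrix of a unit quaternion is special
orthogonal. -/
theorem stmt_4 (q0 : ℝ) (qv : R3) (h : q0 ^ 2 + ‖qv‖ ^ 2 = 1) :
    (rod q0 qv)ᵀ * rod q0 qv = 1 ∧ (rod q0 qv).det = 1 := by
  refine ⟨transpose_rod_mul_rod q0 qv h, ?_⟩
  rw [det_rod, ← h]
  ring
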